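/- For each j ≥ 1, the rational function f_j defined by f_1(x) = -x + 1/2 and f_{j+1} = β_{j+1} + x²/(f_j + β_j) (β_j = j - 1/2), viewed as a function of t via x = e^{-t}, satisfies the Riccati equation f_j' + f_j² = β_j² + e^{-2t} (derivative in t) at all t where the denominators are nonzero. Base case j = 1: (d/dt)(-e^{-t} + 1/2) + (-e^{-t} + 1/2)² = 1/4 + e^{-2t}. -/

import Mathlib

/-- `β_j = j - 1/2`. -/
noncomputable def betaCF (j : ℕ) : ℝ := (j : ℝ) - 1 / 2

/-- The continued-fraction sequence as functions of `t`, with `x = e^{-t}`: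
`F₁(t) = -e^{-t} + 1/2`, `F_{j+1}(t) = β_{j+1} + e^{-2t}/(F_j(t) + β_j)`. -/
noncomputable def funCF : ℕ → ℝ → ℝ
  | 0 => fun _ => 0
  | 1 => fun t => -Real.exp (-t) + 1 / 2
  | j + 2 => fun t => betaCF (j + 2)
      + Real.exp (-2 * t) / (funCF (j + 1) t + betaCF (j + 1))

lemma funCF_hasDerivAt (j : ℕ) (hj : 1 ≤ j) (t : ℝ)
    (hden : ∀ k, 1 ≤ k → k < j → funCF k t + betaCF k ≠ 0) :
    HasDerivAt (funCF j)
      ((betaCF j) ^ 2 + Real.exp (-2 * t) - (funCF j t) ^ 2) t := by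
  induction j with
  | zero => omega
  | succ n ih =>
    cases n with
    | zero =>
      have h1 : HasDerivAt (fun s => -Real.exp (-s) + 1 / 2) (Real.exp (-t)) t := by
        have h := (Real.hasDerivAt_exp (-t)).comp t ((hasDerivAt_id t).neg)
        simpa using (h.neg.add_const (1 / 2))
      have hx : Real.exp (-2 * t) = Real.exp (-t) * Real.exp (-t) := by
        rw [← Real.exp_add]; ring_nf
      have hval : (betaCF 1) ^ 2 + Real.exp (-2 * t) - (funCF 1 t) ^ 2
          = Real.exp (-t) := by
        simp only [funCF, betaCF, Nat.cast_one]
        rw [hx]; ring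
      rw [hval]
      exact h1
    | succ m =>
      have hm1 : (1 : ℕ) ≤ m + 1 := by omega
      have hDne : funCF (m + 1) t + betaCF (m + 1) ≠ 0 :=
        hden (m + 1) hm1 (by omega)
      have hg := ih hm1 (fun k hk hk' => hden k hk (by omega))
      set X := Real.exp (-2 * t) with hX
      set g := funCF (m + 1) with hgdef
      set β := betaCF (m + 1) with hβ
      have hX' : HasDerivAt (fun s => Real.exp (-2 * s)) (-2 * X) t := by
        have h := ((hasDerivAt_id t).const_mul (-2 : ℝ)).exp
        simpa [hX, mul_comm] using h
      have hD : HasDerivAt (fun s => g s + β)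
          (β ^ 2 + X - (g t) ^ 2) t := hg.add_const β
      have hdiv := hX'.div hD hDne
      have hfinal := hdiv.const_add (betaCF (m + 2))
      have hshape : funCF (m + 2)
          = fun s => betaCF (m + 2) + Real.exp (-2 * s) / (g s + β) := by
        rfl
      rw [hshape]
      convert hfinal using 1
      case e'_4 => rfl
      case e'_5 => rfl
      case e'_8 => rfl
      have hγ : betaCF (m + 2) = β + 1 := by
        simp only [hβ, betaCF]; push_cast; ring
      have hγ2 : betaCF (m + 1 + 1) = β + 1 := hγ
      simp only [hγ, hγ2, ← hX]
      field_simp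
      ring

/-- Each `f_j`, viewed as a function of `t` via `x = e^{-t}`, satisfies the
Riccati equation `f_j' + f_j² = β_j² + e^{-2t}` wherever the denominators in
the recurrence are nonzero. -/
theorem funCF_riccati (j : ℕ) (hj : 1 ≤ j) (t : ℝ)
    (hden : ∀ k, 1 ≤ k → k < j → funCF k t + betaCF k ≠ 0) :
    deriv (funCF j) t + (funCF j t) ^ 2 = (betaCF j) ^ 2 + Real.exp (-2 * t) := by
  rw [(funCF_hasDerivAt j hj t hden).deriv]
  ring
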